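/- Let z ∈ ℂ with Im z > 0. Then there is a unique w ∈ ℂ with w² = z² − 1 and |w − z| < 1, and for every x ∈ ℤ one has ∫_{[0,1)} e^{2πi k x}/(−cos(2πk) − z) dk = −(w − z)^{|x|}/w. In particular G₀^{(1)}(x;z) = −(w − z)^{|x|}/w, and the modulus of G₀^{(1)}(x;z) decays geometrically in |x| with ratio |w − z| < 1. -/

import Mathlib

open MeasureTheory Complex Real Filter

/-- The symbol of the `ν`-dimensional discrete Laplacian: `E_ν(k) = -∑ᵢ cos(2π kᵢ)`. -/
noncomputable def latE (ν : ℕ) (k : Fin ν → ℝ) : ℝ := -∑ i, Real.cos (2 * Real.pi * k i)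

/-- The unit cube `[0,1)^ν`. -/
def cube (ν : ℕ) : Set (Fin ν → ℝ) := Set.univ.pi fun _ => Set.Ico (0:ℝ) 1

/-- The free lattice Green function
`G₀^{(ν)}(x;z) = ∫_{[0,1)^ν} e^{2πi k·x} / (E_ν(k) - z) dk`. -/
noncomputable def G0 (ν : ℕ) (x : Fin ν → ℤ) (z : ℂ) : ℂ :=
  ∫ k in cube ν, Complex.exp (2 * (Real.pi : ℂ) * Complex.I * ∑ i, (k i : ℂ) * (x i : ℂ)) /
    ((latE ν k : ℂ) - z)

/-- `γ̂₀(k₂;z) = G₀^{(d₁)}(0; z - E_{d₂}(k₂))`. -/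
noncomputable def gammaHat (d₁ d₂ : ℕ) (k₂ : Fin d₂ → ℝ) (z : ℂ) : ℂ :=
  G0 d₁ 0 (z - (latE d₂ k₂ : ℂ))

/-- `b̂(k₂;z) = (g γ̂₀(k₂;z) - i) / (g γ̂₀(k₂;z) + i)`. -/
noncomputable def bHat (d₁ d₂ : ℕ) (g : ℝ) (k₂ : Fin d₂ → ℝ) (z : ℂ) : ℂ :=
  ((g : ℂ) * gammaHat d₁ d₂ k₂ z - Complex.I) / ((g : ℂ) * gammaHat d₁ d₂ k₂ z + Complex.I)

/-! Put `q = w - z`. The roots `±w` of `w² = z² - 1` give `q` and `-w - z = q⁻¹`, the two roots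
of `q² + 2zq + 1 = 0`. Neither lies on the unit circle when `Im z ≠ 0` (otherwise `q⁻¹ = conj q`
and `-2z = q + q⁻¹` would be real), so exactly one choice of `w` has `‖q‖ < 1`.
For `u = e^{2πit}` the Poisson kernel identity
`∑ₘ q^|m| uᵐ = (1 - q²) / ((1 - qu)(1 - q/u))`, together with `q + q⁻¹ = -2z` and
`q⁻¹ - q = -2w`, expands `(-cos 2πt - z)⁻¹` into the absolutely convergent Fourier series
`∑ₘ -q^|m| / w · e^{2πimt}`; integrating term by term against `e^{2πixt}` over `[0, 1)` picks
out the coefficient of index `-x`. -/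

section SquareRoot

variable {z w : ℂ}

lemma sub_mul_neg_sub_eq_one (hw : w ^ 2 = z ^ 2 - 1) : (w - z) * (-w - z) = 1 := by
  linear_combination -hw

lemma norm_neg_sub_eq_inv (hw : w ^ 2 = z ^ 2 - 1) : ‖-w - z‖ = ‖w - z‖⁻¹ := by
  rw [eq_inv_of_mul_eq_one_right (sub_mul_neg_sub_eq_one hw), norm_inv]

lemma norm_sub_ne_one (hz : z.im ≠ 0) (hw : w ^ 2 = z ^ 2 - 1) : ‖w - z‖ ≠ 1 := by
  intro h
  have hconj : -w - z = starRingEnd ℂ (w - z) := by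
    rw [← Complex.inv_eq_conj h, eq_inv_of_mul_eq_one_right (sub_mul_neg_sub_eq_one hw)]
  have him := congrArg Complex.im hconj
  simp only [Complex.sub_im, Complex.neg_im, Complex.conj_im] at him
  exact hz (by linarith)

lemma ne_zero_of_norm_sub_lt_one (hw : w ^ 2 = z ^ 2 - 1) (hq : ‖w - z‖ < 1) : w ≠ 0 := by
  rintro rfl
  have h := norm_neg_sub_eq_inv hw
  rw [neg_zero] at h
  have hpos : 0 < ‖0 - z‖ := by
    rw [zero_sub, norm_neg, norm_pos_iff]
    rintro rfl
    norm_num at hw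
  linarith [(one_lt_inv₀ hpos).2 hq]

theorem existsUnique_sq_eq_and_norm_sub_lt_one (hz : z.im ≠ 0) :
    ∃! w : ℂ, w ^ 2 = z ^ 2 - 1 ∧ ‖w - z‖ < 1 := by
  obtain ⟨s, hs⟩ := IsAlgClosed.exists_pow_nat_eq (z ^ 2 - 1) two_pos
  have hs' : (-s) ^ 2 = z ^ 2 - 1 := by rw [neg_sq, hs]
  obtain ⟨w, hw, hq⟩ : ∃ w : ℂ, w ^ 2 = z ^ 2 - 1 ∧ ‖w - z‖ < 1 := by
    rcases (norm_sub_ne_one hz hs).lt_or_gt with h | h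
    · exact ⟨s, hs, h⟩
    · exact ⟨-s, hs', by rw [norm_neg_sub_eq_inv hs]; exact inv_lt_one_of_one_lt₀ h⟩
  refine ⟨w, ⟨hw, hq⟩, fun v ⟨hv, hvq⟩ => ?_⟩
  rcases sq_eq_sq_iff_eq_or_eq_neg.1 (hv.trans hw.symm) with rfl | rfl
  · rfl
  · have hpos : 0 < ‖w - z‖ :=
      norm_pos_iff.2 (left_ne_zero_of_mul_eq_one (sub_mul_neg_sub_eq_one hw))
    rw [norm_neg_sub_eq_inv hw] at hvq
    linarith [(one_lt_inv₀ hpos).2 hq]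

end SquareRoot

lemma one_sub_mul_ne_zero {q u : ℂ} (hq : ‖q‖ < 1) (hu : ‖u‖ = 1) : 1 - q * u ≠ 0 := by
  refine sub_ne_zero.2 fun h => ?_
  have h' := congrArg norm h
  rw [norm_one, norm_mul, hu, mul_one] at h'
  linarith

theorem hasSum_pow_natAbs_mul_zpow {q u : ℂ} (hq : ‖q‖ < 1) (hu : ‖u‖ = 1) :
    HasSum (fun m : ℤ => q ^ m.natAbs * u ^ m)
      ((1 - q ^ 2) / ((1 - q * u) * (1 - q * u⁻¹))) := by
  have hqu : ‖q * u‖ < 1 := by rwa [norm_mul, hu, mul_one]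
  have hqu' : ‖q * u⁻¹‖ < 1 := by rwa [norm_mul, norm_inv, hu, inv_one, mul_one]
  have hu0 : u ≠ 0 := norm_ne_zero_iff.1 (by rw [hu]; exact one_ne_zero)
  have h1 : 1 - q * u ≠ 0 := one_sub_mul_ne_zero hq hu
  have h2 : u - q ≠ 0 := sub_ne_zero.2 fun h => by rw [h] at hu; linarith
  have hsum := HasSum.of_nat_of_neg (f := fun m : ℤ => q ^ m.natAbs * u ^ m)
    (by simpa only [Int.natAbs_natCast, zpow_natCast, mul_pow] using
      hasSum_geometric_of_norm_lt_one hqu)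
    (by simpa only [Int.natAbs_neg, Int.natAbs_natCast, zpow_neg, zpow_natCast, mul_pow,
      inv_pow] using hasSum_geometric_of_norm_lt_one hqu')
  have hval : (1 - q ^ 2) / ((1 - q * u) * (1 - q * u⁻¹)) =
      (1 - q * u)⁻¹ + (1 - q * u⁻¹)⁻¹ - q ^ Int.natAbs 0 * u ^ 0 := by
    field_simp
    ring
  rw [hval]
  exact hsum

theorem hasSum_inv_neg_cos_sub {z w : ℂ} (hw : w ^ 2 = z ^ 2 - 1) (hq : ‖w - z‖ < 1) (t : ℝ) :
    HasSum (fun m : ℤ => -(w - z) ^ m.natAbs / w * cexp (2 * π * I * m * t))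
      (-Complex.cos (2 * π * t) - z)⁻¹ := by
  set u := cexp (2 * π * t * I)
  have hu : ‖u‖ = 1 := by simpa using Complex.norm_exp_ofReal_mul_I (2 * π * t)
  have hu0 : u ≠ 0 := Complex.exp_ne_zero _
  have hw0 : w ≠ 0 := ne_zero_of_norm_sub_lt_one hw hq
  have hq0 : w - z ≠ 0 := left_ne_zero_of_mul_eq_one (sub_mul_neg_sub_eq_one hw)
  have hcos : Complex.cos (2 * π * t) = (u + u⁻¹) / 2 := by
    rw [Complex.cos, ← Complex.exp_neg, neg_mul]
  have hexp (m : ℤ) : cexp (2 * π * I * m * t) = u ^ m := by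
    rw [← Complex.exp_int_mul]; ring_nf
  have hden : (1 - (w - z) * u) * (1 - (w - z) * u⁻¹) =
      2 * (w - z) * (-Complex.cos (2 * π * t) - z) := by
    rw [hcos]; field_simp; linear_combination u * hw
  have h1 := one_sub_mul_ne_zero hq hu
  have h2 := one_sub_mul_ne_zero hq (u := u⁻¹) (by rw [norm_inv, hu, inv_one])
  have hD : -Complex.cos (2 * π * t) - z ≠ 0 := by
    intro h; rw [h, mul_zero] at hden; exact mul_ne_zero h1 h2 hden
  have hval : (-Complex.cos (2 * π * t) - z)⁻¹ =
      -w⁻¹ * ((1 - (w - z) ^ 2) / ((1 - (w - z) * u) * (1 - (w - z) * u⁻¹))) := by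
    rw [hden]; field_simp; linear_combination hw
  rw [hval]
  refine ((hasSum_pow_natAbs_mul_zpow hq hu).mul_left (-w⁻¹)).congr_fun fun m => ?_
  rw [hexp]
  ring

lemma setIntegral_Ico_exp_two_pi_I_int_mul (n : ℤ) :
    ∫ t in Set.Ico (0 : ℝ) 1, cexp (2 * π * I * n * t) = if n = 0 then 1 else 0 := by
  rw [integral_Ico_eq_integral_Ioo, ← integral_Ioc_eq_integral_Ioo,
    ← intervalIntegral.integral_of_le zero_le_one]
  split_ifs with hn
  · simp [hn]
  · have hc : 2 * π * I * n ≠ 0 := by simp [Real.pi_ne_zero, hn]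
    rw [integral_exp_mul_complex hc, Complex.ofReal_one, mul_one, Complex.ofReal_zero, mul_zero,
      show 2 * π * I * n = n * (2 * π * I) by ring, Complex.exp_int_mul_two_pi_mul_I]
    simp

theorem setIntegral_Ico_exp_mul_tsum {c : ℤ → ℂ} (hc : Summable c) (n : ℤ) :
    ∫ t in Set.Ico (0 : ℝ) 1, cexp (2 * π * I * n * t) * ∑' m, c m * cexp (2 * π * I * m * t) =
      c (-n) := by
  have hexp (m : ℤ) (t : ℝ) : cexp (2 * π * I * n * t) * (c m * cexp (2 * π * I * m * t)) =
      c m * cexp (2 * π * I * (m + n : ℤ) * t) := by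
    rw [mul_left_comm, ← Complex.exp_add]; push_cast; ring_nf
  have hnorm (m : ℤ) (t : ℝ) : ‖c m * cexp (2 * π * I * (m + n : ℤ) * t)‖ = ‖c m‖ := by
    rw [norm_mul, show 2 * π * I * (m + n : ℤ) * t = (2 * π * (m + n : ℤ) * t : ℝ) * I by
      push_cast; ring, Complex.norm_exp_ofReal_mul_I, mul_one]
  simp_rw [← tsum_mul_left, hexp]
  rw [← integral_tsum_of_summable_integral_norm]
  · simp_rw [integral_const_mul, setIntegral_Ico_exp_two_pi_I_int_mul, mul_ite, mul_one, mul_zero]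
    rw [tsum_eq_single (-n) fun m hm => if_neg (by omega)]
    simp
  · exact fun m => (Continuous.integrableOn_Icc (by fun_prop)).mono_set Set.Ico_subset_Icc_self
  · refine hc.norm.congr fun m => ?_
    simp only [hnorm]
    simp

lemma setIntegral_cube_one {E : Type*} [NormedAddCommGroup E] [NormedSpace ℝ E] (f : ℝ → E) :
    ∫ k in cube 1, f (k 0) = ∫ t in Set.Ico (0 : ℝ) 1, f t := by
  have hcube : cube 1 = MeasurableEquiv.funUnique (Fin 1) ℝ ⁻¹' Set.Ico 0 1 := by
    ext k
    simp [cube, Set.mem_pi, Fin.forall_fin_one]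
  rw [hcube]
  exact (volume_preserving_funUnique (Fin 1) ℝ).setIntegral_preimage_emb
    (MeasurableEquiv.measurableEmbedding _) f _

lemma G0_one_eq_setIntegral_Ico (x : ℤ) (z : ℂ) :
    G0 1 (fun _ => x) z =
      ∫ t in Set.Ico (0 : ℝ) 1, cexp (2 * π * I * x * t) * (-Complex.cos (2 * π * t) - z)⁻¹ := by
  rw [← setIntegral_cube_one, G0]
  congr 1 with k
  simp only [latE, Fin.sum_univ_one, div_eq_mul_inv]
  push_cast
  ring_nf

theorem G0_one_dimensional_formula (z : ℂ) (hz : 0 < z.im) :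
    (∃! w : ℂ, w ^ 2 = z ^ 2 - 1 ∧ ‖w - z‖ < 1) ∧
    (∀ w : ℂ, w ^ 2 = z ^ 2 - 1 → ‖w - z‖ < 1 →
      ∀ x : ℤ, G0 1 (fun _ => x) z = -(w - z) ^ x.natAbs / w) := by
  refine ⟨existsUnique_sq_eq_and_norm_sub_lt_one hz.ne', fun w hw hq x => ?_⟩
  have hsummable : Summable fun m : ℤ => -(w - z) ^ m.natAbs / w := by
    simpa [neg_div] using ((hasSum_pow_natAbs_mul_zpow hq norm_one).summable.div_const w).neg
  simp_rw [G0_one_eq_setIntegral_Ico, ← (hasSum_inv_neg_cos_sub hw hq _).tsum_eq,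
    setIntegral_Ico_exp_mul_tsum hsummable, Int.natAbs_neg]
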